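/- Let R be a domain containing a field k of characteristic zero, n ≥ 2, and let D be a triangular locally nilpotent R-derivation of R[X₁,...,Xₙ], i.e., D(Xᵢ) ∈ R[X₁,...,X_{i-1}] for all i. Then ker(D) is non-rigid: it admits a nonzero locally nilpotent derivation. -/

import Mathlib

open MvPolynomial

variable {k R : Type*} [Field k] [CharZero k] [CommRing R] [IsDomain R] [Algebra k R]

/-- A derivation is locally nilpotent if every element is killed by some iterate. -/
def IsLocallyNilpotentDeriv {S A : Type*} [CommRing S] [CommRing A] [Algebra S A]
    (D : Derivation S A A) : Prop :=
  ∀ x : A, ∃ n : ℕ, (⇑D)^[n] x = 0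

/-- The kernel of a derivation, as a subalgebra. -/
def Derivation.kerSubalgebra {S A : Type*} [CommRing S] [CommRing A] [Algebra S A]
    (D : Derivation S A A) : Subalgebra S A where
  carrier := {b | D b = 0}
  mul_mem' := by
    intro a b ha hb
    simp only [Set.mem_setOf_eq] at *
    rw [D.leibniz]
    simp [ha, hb]
  add_mem' := by
    intro a b ha hb
    simp only [Set.mem_setOf_eq] at *
    simp [ha, hb]
  algebraMap_mem' := by intro r; simp [Set.mem_setOf_eq]

/-- A subalgebra (e.g. the kernel of a derivation) is non-rigid if it admits a nonzero
locally nilpotent derivation. -/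
def NonRigid {S A : Type*} [CommRing S] [CommRing A] [Algebra S A]
    (T : Subalgebra S A) : Prop :=
  ∃ δ : Derivation S T T, δ ≠ 0 ∧ IsLocallyNilpotentDeriv δ

/-!
By triangularity, `⁅∂ⱼ, D⁆ = ∑ₗ ∂ⱼ(D Xₗ) ∂ₗ` only involves the `∂ₗ` with `l > j`. Hence if `j` is the
largest index for which `∂ⱼ` does not vanish on `ker D`, then `∂ⱼ` maps `ker D` into itself and
restricts to a nonzero locally nilpotent derivation of it.

If there is no such `j`, all partial derivatives vanish on `ker D`. In characteristic zero this is
impossible: writing `D X₀ = r ∈ R` and `D X₁ = g(X₀)`, either `r = 0` and `X₀ ∈ ker D`, or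
`M r X₁ - H(X₀) ∈ ker D` where `H' = M g` for a suitable positive integer `M`. In characteristic
`p` it forces `ker D = R[X₀ᵖ, …, Xₙ₋₁ᵖ]`, a polynomial ring, which carries the locally nilpotent
derivation `∂/∂(X₀ᵖ)`.
-/

lemma Derivation.mem_kerSubalgebra {S A : Type*} [CommRing S] [CommRing A] [Algebra S A]
    {D : Derivation S A A} {x : A} : x ∈ D.kerSubalgebra ↔ D x = 0 :=
  Iff.rfl

section Transport

variable {S A B : Type*} [CommRing S] [CommRing A] [Algebra S A] [CommRing B] [Algebra S B]

def Derivation.restrict (E : Derivation S A A) (T : Subalgebra S A)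
    (hT : ∀ x ∈ T, E x ∈ T) : Derivation S T T where
  toFun x := ⟨E x, hT x x.2⟩
  map_add' x y := Subtype.ext (E.map_add x y)
  map_smul' r x := Subtype.ext (E.map_smul r x)
  map_one_eq_zero' := Subtype.ext E.map_one_eq_zero
  leibniz' x y := Subtype.ext (E.leibniz x y)

def Derivation.conj (e : A ≃ₐ[S] B) (E : Derivation S A A) : Derivation S B B where
  toFun b := e (E (e.symm b))
  map_add' a b := by simp
  map_smul' r b := by simp
  map_one_eq_zero' := by simp
  leibniz' a b := by simp [E.leibniz, smul_eq_mul]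

theorem Derivation.semiconj_conj (e : A ≃ₐ[S] B) (E : Derivation S A A) :
    Function.Semiconj e E (E.conj e) := fun a =>
  congrArg (e ∘ E) (e.symm_apply_apply a).symm

theorem IsLocallyNilpotentDeriv.restrict {E : Derivation S A A} (hE : IsLocallyNilpotentDeriv E)
    (T : Subalgebra S A) (hT : ∀ x ∈ T, E x ∈ T) : IsLocallyNilpotentDeriv (E.restrict T hT) := by
  intro x
  obtain ⟨m, hm⟩ := hE x
  have h : Function.Semiconj Subtype.val (E.restrict T hT) E := fun _ => rfl
  exact ⟨m, Subtype.ext ((h.iterate_right m x).trans hm)⟩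

theorem IsLocallyNilpotentDeriv.conj {E : Derivation S A A} (hE : IsLocallyNilpotentDeriv E)
    (e : A ≃ₐ[S] B) : IsLocallyNilpotentDeriv (E.conj e) := by
  intro b
  obtain ⟨m, hm⟩ := hE (e.symm b)
  refine ⟨m, ?_⟩
  have h := (E.semiconj_conj e).iterate_right m (e.symm b)
  rw [e.apply_symm_apply] at h
  rw [← h, hm, map_zero]

theorem nonRigid_of_restrict {T : Subalgebra S A} (E : Derivation S A A)
    (hE : IsLocallyNilpotentDeriv E) (hT : ∀ x ∈ T, E x ∈ T) {x : A} (hx : x ∈ T)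
    (hEx : E x ≠ 0) : NonRigid T :=
  ⟨E.restrict T hT, fun h => hEx congr(($h ⟨x, hx⟩ : A)), hE.restrict T hT⟩

theorem nonRigid_of_algEquiv {T : Subalgebra S A} (e : B ≃ₐ[S] T) (E : Derivation S B B)
    (hE₀ : E ≠ 0) (hE : IsLocallyNilpotentDeriv E) : NonRigid T := by
  refine ⟨E.conj e, fun h => hE₀ (Derivation.ext fun b => e.injective ?_), hE.conj e⟩
  rw [E.semiconj_conj e b, h, Derivation.zero_apply, Derivation.zero_apply, map_zero]

end Transport

theorem Polynomial.exists_derivative_eq_nsmul {R : Type*} [CommSemiring R] (q : Polynomial R) :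
    ∃ M : ℕ, M ≠ 0 ∧ ∃ Q : Polynomial R, Polynomial.derivative Q = M • q := by
  induction q using Polynomial.induction_on' with
  | add q₁ q₂ h₁ h₂ =>
    obtain ⟨M₁, hM₁, Q₁, hQ₁⟩ := h₁
    obtain ⟨M₂, hM₂, Q₂, hQ₂⟩ := h₂
    refine ⟨M₁ * M₂, mul_ne_zero hM₁ hM₂, M₂ • Q₁ + M₁ • Q₂, ?_⟩
    rw [map_add, map_nsmul, map_nsmul, hQ₁, hQ₂, smul_add, smul_smul, smul_smul, mul_comm M₂]
  | monomial m a =>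
    refine ⟨m + 1, m.succ_ne_zero, Polynomial.monomial (m + 1) a, ?_⟩
    rw [Polynomial.derivative_monomial, Polynomial.smul_monomial]
    simp [nsmul_eq_mul, mul_comm]

namespace MvPolynomial

variable {R σ : Type*}

theorem mem_range_expand_of_forall_dvd [CommSemiring R] (p : ℕ) {f : MvPolynomial σ R}
    (h : ∀ t ∈ f.support, ∀ i, p ∣ t i) : f ∈ (expand p).range := by
  rw [f.as_sum]
  refine Subalgebra.sum_mem _ fun t ht => ⟨monomial (t.mapRange (· / p) (Nat.zero_div p))
    (coeff t f), ?_⟩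
  change expand p _ = _
  rw [expand_monomial]
  congr
  ext i
  exact Nat.mul_div_cancel' (h t ht i)

section CommRing

variable [CommRing R]

theorem pderiv_iterate_eq_zero_of_coeff_eq_zero (i : σ) {k : ℕ} {f : MvPolynomial σ R}
    (h : ∀ m, coeff (m + Finsupp.single i k) f = 0) : (⇑(pderiv i))^[k] f = 0 := by
  induction k generalizing f with
  | zero => ext m; simpa using h m
  | succ k ih =>
    rw [Function.iterate_succ_apply]
    refine ih fun m => ?_
    rw [coeff_pderiv, add_assoc, ← Finsupp.single_add, h, zero_mul]

theorem isLocallyNilpotentDeriv_pderiv (i : σ) :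
    IsLocallyNilpotentDeriv (pderiv i : Derivation R (MvPolynomial σ R) (MvPolynomial σ R)) := by
  intro f
  refine ⟨f.degreeOf i + 1, pderiv_iterate_eq_zero_of_coeff_eq_zero i fun m => ?_⟩
  by_contra hm
  have := monomial_le_degreeOf i (mem_support_iff.2 hm)
  simp at this
  omega

theorem derivation_apply_eq_sum [Fintype σ]
    (D : Derivation R (MvPolynomial σ R) (MvPolynomial σ R)) (f : MvPolynomial σ R) :
    D f = ∑ l, D (X l) * pderiv l f := by
  classical
  let E : Derivation R (MvPolynomial σ R) (MvPolynomial σ R) := ∑ l, D (X l) • pderiv l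
  have hE : ∀ g, E g = ∑ l, D (X l) * pderiv l g := fun g => by
    rw [← Derivation.coeFnAddMonoidHom_apply, map_sum, Finset.sum_apply]
    rfl
  rw [← hE, derivation_ext (D₁ := D) (D₂ := E) fun i => by simp [hE, pderiv_X, Pi.single_apply]]

section Triangular

variable [LinearOrder σ] [Fintype σ]
  {D : Derivation R (MvPolynomial σ R) (MvPolynomial σ R)}

theorem pderiv_mem_ker_of_triangular (htri : ∀ i, D (X i) ∈ supported R {j | j < i}) {j : σ}
    {x : MvPolynomial σ R} (hx : D x = 0) (hxj : ∀ l, j < l → pderiv l x = 0) :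
    D (pderiv j x) = 0 := by
  classical
  have hcomm : ⁅pderiv (R := R) j, D⁆ x = 0 := by
    rw [derivation_apply_eq_sum]
    refine Finset.sum_eq_zero fun l _ => ?_
    rcases le_or_gt l j with hlj | hjl
    · have : pderiv j (D (X l)) = 0 :=
        pderiv_eq_zero_of_notMem_vars fun hj => (mem_supported.1 (htri l) hj).not_ge hlj
      simp [Derivation.commutator_apply, this, pderiv_X, Pi.single_apply, apply_ite D]
    · simp [hxj l hjl]
  rwa [Derivation.commutator_apply, hx, map_zero, zero_sub, neg_eq_zero] at hcomm

theorem nonRigid_kerSubalgebra_of_pderiv_ne_zero (htri : ∀ i, D (X i) ∈ supported R {j | j < i})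
    {x : MvPolynomial σ R} (hx : D x = 0) {i : σ} (hxi : pderiv i x ≠ 0) :
    NonRigid D.kerSubalgebra := by
  obtain ⟨j, hmax⟩ :=
    (Set.toFinite {j : σ | ∃ y, D y = 0 ∧ pderiv j y ≠ 0}).exists_maximal ⟨i, x, hx, hxi⟩
  obtain ⟨y, hy, hyj⟩ := hmax.prop
  refine nonRigid_of_restrict (pderiv j) (isLocallyNilpotentDeriv_pderiv j) (fun z hz => ?_)
    (D.mem_kerSubalgebra.2 hy) hyj
  exact pderiv_mem_ker_of_triangular htri hz fun l hl =>
    not_not.1 fun hzl => hmax.not_gt ⟨z, hz, hzl⟩ hl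

end Triangular

section CharZero

variable [IsDomain R] [CharZero R]

theorem exists_ker_pderiv_ne_zero {D : Derivation R (MvPolynomial σ R) (MvPolynomial σ R)}
    {i₀ i₁ : σ} (hne : i₀ ≠ i₁) (h₀ : D (X i₀) ∈ supported R ∅)
    (h₁ : D (X i₁) ∈ supported R {i₀}) : ∃ x, D x = 0 ∧ ∃ i, pderiv i x ≠ 0 := by
  rw [supported_empty, Algebra.mem_bot] at h₀
  obtain ⟨r, hr⟩ := h₀
  obtain rfl | hr₀ := eq_or_ne r 0
  · exact ⟨X i₀, by rw [← hr, map_zero], i₀, by simp⟩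
  rw [supported_eq_adjoin_X, Set.image_singleton, Algebra.adjoin_singleton_eq_range_aeval] at h₁
  obtain ⟨q, hq : Polynomial.aeval (X i₀) q = D (X i₁)⟩ := h₁
  obtain ⟨M, hM, Q, hQ⟩ := q.exists_derivative_eq_nsmul
  refine ⟨C (M * r) * X i₁ - Polynomial.aeval (X i₀) Q, ?_, i₁, ?_⟩
  · simp only [map_sub, D.leibniz, Derivation.map_aeval, hQ, ← hr, ← hq, derivation_C, map_nsmul]
    simp only [smul_eq_mul, nsmul_eq_mul, algebraMap_eq, C_mul, map_natCast]
    ring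
  · simp [Derivation.map_aeval, pderiv_X_of_ne hne, hM, hr₀]

end CharZero

end CommRing

section CharP

variable [CommRing R] (p : ℕ) [CharP R p]

theorem range_expand_le_kerSubalgebra (D : Derivation R (MvPolynomial σ R) (MvPolynomial σ R)) :
    (expand p).range ≤ D.kerSubalgebra := by
  rw [show expand p = aeval (fun i => X i ^ p : σ → MvPolynomial σ R) from rfl, aeval_range,
    Algebra.adjoin_le_iff]
  rintro _ ⟨i, rfl⟩
  simp [D.mem_kerSubalgebra, D.leibniz_pow, nsmul_eq_mul]

theorem dvd_of_pderiv_eq_zero [NoZeroDivisors R] {i : σ} {f : MvPolynomial σ R}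
    (hf : pderiv i f = 0) {t : σ →₀ ℕ} (ht : t ∈ f.support) : p ∣ t i := by
  obtain hti | hti := eq_or_ne (t i) 0
  · simp [hti]
  have hsub : t - Finsupp.single i 1 + Finsupp.single i 1 = t :=
    tsub_add_cancel_of_le (Finsupp.single_le_iff.2 (Nat.one_le_iff_ne_zero.2 hti))
  have hti' : (t - Finsupp.single i 1 : σ →₀ ℕ) i + 1 = t i := by
    simpa using DFunLike.congr_fun hsub i
  have h := coeff_pderiv (i := i) f (t - Finsupp.single i 1)
  rw [hf, hsub, coeff_zero, eq_comm] at h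
  rw [← CharP.cast_eq_zero_iff R, ← hti']
  exact_mod_cast (mul_eq_zero.1 h).resolve_left (mem_support_iff.1 ht)

theorem nonRigid_kerSubalgebra_of_charP [IsDomain R] [Nonempty σ] (hp : 0 < p)
    {D : Derivation R (MvPolynomial σ R) (MvPolynomial σ R)}
    (h : ∀ x, D x = 0 → ∀ i, pderiv i x = 0) : NonRigid D.kerSubalgebra := by
  have hker : (expand p).range = D.kerSubalgebra :=
    le_antisymm (range_expand_le_kerSubalgebra p D) fun x hx =>
      mem_range_expand_of_forall_dvd p fun t ht i => dvd_of_pderiv_eq_zero p (h x hx i) ht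
  let e := (AlgEquiv.ofInjective _ (expand_injective hp)).trans (Subalgebra.equivOfEq _ _ hker)
  obtain ⟨i⟩ := ‹Nonempty σ›
  refine nonRigid_of_algEquiv e (pderiv i) (fun h0 => ?_) (isLocallyNilpotentDeriv_pderiv i)
  simpa using congr($h0 (X i))

end CharP

end MvPolynomial

theorem kernel_nonrigid_of_triangular_general {n : ℕ} (hn : 2 ≤ n)
    (D : Derivation R (MvPolynomial (Fin n) R) (MvPolynomial (Fin n) R))
    (htri : ∀ i : Fin n, D (X i) ∈ MvPolynomial.supported R {j : Fin n | j < i}) :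
    NonRigid D.kerSubalgebra := by
  by_cases hker : ∃ x, D x = 0 ∧ ∃ i, pderiv i x ≠ 0
  · obtain ⟨x, hx, i, hxi⟩ := hker
    exact nonRigid_kerSubalgebra_of_pderiv_ne_zero htri hx hxi
  push Not at hker
  let i₀ : Fin n := ⟨0, by omega⟩
  let i₁ : Fin n := ⟨1, by omega⟩
  obtain ⟨p, hp⟩ := CharP.exists R
  rcases CharP.char_is_prime_or_zero R p with hprime | rfl
  · have : Nonempty (Fin n) := ⟨i₀⟩
    exact nonRigid_kerSubalgebra_of_charP p hprime.pos hker
  · have : CharZero R := CharP.charP_to_charZero R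
    have h₀ : {j | j < i₀} = ∅ := Set.eq_empty_of_forall_notMem fun j hj => Nat.not_lt_zero _ hj
    have h₁ : {j | j < i₁} = {i₀} := by
      ext j
      simp only [Set.mem_ofPred_eq, Set.mem_singleton_iff, Fin.lt_def, Fin.ext_iff, i₀, i₁]
      omega
    obtain ⟨x, hx, i, hxi⟩ := exists_ker_pderiv_ne_zero (D := D) (i₀ := i₀) (i₁ := i₁)
      (by simp [i₀, i₁, Fin.ext_iff]) (h₀ ▸ htri i₀) (h₁ ▸ htri i₁)
    exact absurd (hker x hx i) hxi

/-- The kernel of a triangular locally nilpotent R-derivation of R[X₁,…,Xₙ], n ≥ 2,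
is non-rigid. -/
theorem kernel_nonrigid_of_triangular {n : ℕ} (hn : 2 ≤ n)
    (D : Derivation R (MvPolynomial (Fin n) R) (MvPolynomial (Fin n) R))
    (hLND : IsLocallyNilpotentDeriv D)
    (htri : ∀ i : Fin n, D (X i) ∈ MvPolynomial.supported R {j : Fin n | j < i}) :
    NonRigid D.kerSubalgebra :=
  kernel_nonrigid_of_triangular_general hn D htri
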